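/- Fix constants k₀ ≥ 4 and C₀ ≥ 1000 and let E ⊂ ℝ² be finite. There is a universal constant c₀ > 0 such that for every Q ∈ Λ₀ there exists a point x_Q^♯ ∈ Q with dist(x_Q^♯, E) ≥ c₀δ_Q. -/

import Mathlib

open Set Real Pointwise

noncomputable section

abbrev E2 := EuclideanSpace ℝ (Fin 2)

/-- Partial derivative in coordinate direction `i`. -/
noncomputable def pd (i : Fin 2) (F : E2 → ℝ) : E2 → ℝ :=
  fun x => fderiv ℝ F x (EuclideanSpace.single i 1)

/-- Iterated partial derivative `∂^α` for a multi-index `α = (α₁, α₂)`. -/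
noncomputable def Dmul (α : ℕ × ℕ) (F : E2 → ℝ) : E2 → ℝ :=
  (pd 0)^[α.1] ((pd 1)^[α.2] F)

/-- The multi-indices `α` with `|α| ≤ 2`. -/
def multiIdx2 : Finset (ℕ × ℕ) :=
  (Finset.range 3 ×ˢ Finset.range 3).filter (fun α => α.1 + α.2 ≤ 2)

/-- `(Σ_{|α| ≤ 2} |∂^α F (x)|²)^{1/2}`. -/
noncomputable def C2sum (F : E2 → ℝ) (x : E2) : ℝ :=
  Real.sqrt (∑ α ∈ multiIdx2, (Dmul α F x) ^ 2)

/-- `‖F‖_{C²(ℝ²)} ≤ M`. -/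
def C2NormLE (F : E2 → ℝ) (M : ℝ) : Prop := ∀ x, C2sum F x ≤ M

/-- `f ∈ C²₊(E)`: `f` is the restriction to `E` of a nonnegative `C²` function of finite norm. -/
def MemC2plusTrace (E : Set E2) (f : E2 → ℝ) : Prop :=
  ∃ F : E2 → ℝ, ContDiff ℝ 2 F ∧ (∀ x, 0 ≤ F x) ∧ (∀ x ∈ E, F x = f x) ∧ ∃ M, C2NormLE F M

/-- The trace norm `‖f‖_{C²₊(E)}`. -/
noncomputable def traceNormPlus (E : Set E2) (f : E2 → ℝ) : ℝ :=
  sInf { M | ∃ F : E2 → ℝ, ContDiff ℝ 2 F ∧ (∀ x, 0 ≤ F x) ∧ (∀ x ∈ E, F x = f x) ∧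
    C2NormLE F M }

/-- The one-jet `𝒥_x F`, as an affine function on `ℝ²`. -/
noncomputable def jet (F : E2 → ℝ) (x : E2) : E2 → ℝ :=
  fun y => F x + fderiv ℝ F x (y - x)

/-- The (half-open) square with center `c` and sidelength `δ`. -/
def sqC (c : E2) (δ : ℝ) : Set E2 :=
  {x | ∀ i : Fin 2, c i - δ / 2 ≤ x i ∧ x i < c i + δ / 2}

/-- `σ(x, S)`. -/
def sigmaSet (x : E2) (S : Set E2) : Set (E2 → ℝ) :=
  { P | ∃ φ : E2 → ℝ, ContDiff ℝ 2 φ ∧ (∀ z ∈ S, φ z = 0) ∧ C2NormLE φ 1 ∧ P = jet φ x }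

/-- `σ^♯(x, k)`. -/
def sigmaSharp (E : Set E2) (x : E2) (k : ℕ) : Set (E2 → ℝ) :=
  { P | ∀ S : Set E2, S ⊆ E → S.ncard ≤ k → P ∈ sigmaSet x S }

/-- `Γ₊(x, S, M)` (for the data `f`). -/
def GammaPlus (f : E2 → ℝ) (x : E2) (S : Set E2) (M : ℝ) : Set (E2 → ℝ) :=
  { P | ∃ F : E2 → ℝ, ContDiff ℝ 2 F ∧ (∀ y, 0 ≤ F y) ∧ (∀ z ∈ S, F z = f z) ∧
      C2NormLE F M ∧ P = jet F x }

/-- `Γ₊^♯(x, k, M)` (for `f` given on `E`). -/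
def GammaSharp (E : Set E2) (f : E2 → ℝ) (x : E2) (k : ℕ) (M : ℝ) : Set (E2 → ℝ) :=
  { P | ∀ S : Set E2, S ⊆ E → S.ncard ≤ k → P ∈ GammaPlus f x S M }

/-- `ℬ(x, δ) = {P : |∂^α P(x)| ≤ δ^{2-|α|} for |α| ≤ 1}`. -/
def jetBall (x : E2) (δ : ℝ) : Set (E2 → ℝ) :=
  { P | |P x| ≤ δ ^ 2 ∧ ∀ i : Fin 2, |fderiv ℝ P x (EuclideanSpace.single i 1)| ≤ δ }

/-- `|P|_{ℛ_x}`. -/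
noncomputable def jetNormAt (x : E2) (P : E2 → ℝ) : ℝ :=
  Real.sqrt ((P x) ^ 2 + ‖fderiv ℝ P x‖ ^ 2)

/-- diameter of a set of jets with respect to `|·|_{ℛ_x}`. -/
noncomputable def jetDiam (x : E2) (A : Set (E2 → ℝ)) : ℝ :=
  sSup { r | ∃ P ∈ A, ∃ P' ∈ A, r = jetNormAt x (P - P') }

noncomputable def vec2 (a b : ℝ) : E2 := (WithLp.equiv 2 (Fin 2 → ℝ)).symm ![a, b]

/-- A dyadic square is encoded by a triple `q = (i, j, k)`,
corresponding to `[2^k i, 2^k (i+1)) × [2^k j, 2^k (j+1))`; its sidelength is `2^k`. -/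
noncomputable def dyadicLen (q : ℤ × ℤ × ℤ) : ℝ := (2 : ℝ) ^ q.2.2

noncomputable def dyadicCenter (q : ℤ × ℤ × ℤ) : E2 :=
  vec2 ((2 : ℝ) ^ q.2.2 * ((q.1 : ℝ) + 1 / 2)) ((2 : ℝ) ^ q.2.2 * ((q.2.1 : ℝ) + 1 / 2))

noncomputable def dyadicSq (q : ℤ × ℤ × ℤ) : Set E2 := sqC (dyadicCenter q) (dyadicLen q)

/-- The concentric dilate `λQ` of the dyadic square `q`. -/
noncomputable def dilate (q : ℤ × ℤ × ℤ) (lam : ℝ) : Set E2 :=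
  sqC (dyadicCenter q) (lam * dyadicLen q)

/-- The dyadic parent `Q⁺`. -/
def dyadicParent (q : ℤ × ℤ × ℤ) : ℤ × ℤ × ℤ := (Int.fdiv q.1 2, Int.fdiv q.2.1 2, q.2.2 + 1)

/-- Membership in the Calderón–Zygmund collection `Λ₀`. -/
def memLambda0 (E : Set E2) (k₀ : ℕ) (C₀ : ℝ) (q : ℤ × ℤ × ℤ) : Prop :=
  dyadicLen q ≤ 1 ∧
  (∀ x ∈ dilate q 2, C₀ * dyadicLen q ≤ jetDiam x (sigmaSharp E x k₀)) ∧
  (∃ y ∈ dilate (dyadicParent q) 2, jetDiam y (sigmaSharp E y k₀) < 2 * C₀ * dyadicLen q)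

def Lambda0 (E : Set E2) (k₀ : ℕ) (C₀ : ℝ) : Set (ℤ × ℤ × ℤ) := { q | memLambda0 E k₀ C₀ q }

def LambdaSharp (E : Set E2) (k₀ : ℕ) (C₀ : ℝ) : Set (ℤ × ℤ × ℤ) :=
  { q | q ∈ Lambda0 E k₀ C₀ ∧ (E ∩ dilate q 2).Nonempty }

/-! Take `c₀ = 1/100` and suppose every point of `Q` lies within `δ/100` of `E`, `δ = δ_Q`. Then
`E` has points `z₀, z₁, z₂` near the centre `c` of `Q` and near `c + (δ/4) e₁`, `c + (δ/4) e₂`.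
If `‖φ‖_{C²} ≤ 1` and `φ` vanishes at these points, Taylor's formula along the two almost
orthogonal vectors `zᵢ - z₀` of length about `δ/4` forces `‖∇φ(z₀)‖ = O(δ)`, hence
`|φ(c)| ≤ δ²` and `‖∇φ(c)‖ ≤ 3δ`. So `σ^♯(c, k₀)` has diameter at most `8δ` (as `k₀ ≥ 3`),
contradicting the lower bound `C₀ δ ≥ 1000 δ` that `Λ₀` imposes at `c ∈ 2Q`. -/

namespace EuclideanSpace

variable {ι F : Type*} [Fintype ι] [DecidableEq ι] [NormedAddCommGroup F] [NormedSpace ℝ F]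

theorem opNorm_le_sum_norm_apply_single (L : EuclideanSpace ℝ ι →L[ℝ] F) :
    ‖L‖ ≤ ∑ i, ‖L (single i 1)‖ := by
  refine L.opNorm_le_bound (Finset.sum_nonneg fun _ _ => norm_nonneg _) fun v => ?_
  have hv : ∑ i, v i • single i (1 : ℝ) = v := by
    simpa [basisFun_apply] using (basisFun ι ℝ).sum_repr v
  calc ‖L v‖ = ‖∑ i, v i • L (single i 1)‖ := by simp_rw [← L.map_smul, ← map_sum, hv]
    _ ≤ ∑ i, ‖v i‖ * ‖L (single i 1)‖ := by
        refine (norm_sum_le _ _).trans_eq ?_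
        simp_rw [norm_smul]
    _ ≤ ∑ i, ‖v‖ * ‖L (single i 1)‖ := by
        gcongr with i
        exact PiLp.norm_apply_le v i
    _ = (∑ i, ‖L (single i 1)‖) * ‖v‖ := by rw [← Finset.mul_sum, mul_comm]

theorem mul_opNorm_le_of_near_smul_single (a : EuclideanSpace ℝ ι →L[ℝ] ℝ)
    {u : ι → EuclideanSpace ℝ ι} {r ε η : ℝ} (hr : 0 ≤ r)
    (hu : ∀ i, ‖u i - r • single i 1‖ ≤ ε) (ha : ∀ i, |a (u i)| ≤ η) :
    r * ‖a‖ ≤ Fintype.card ι * (η + ε * ‖a‖) := by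
  have hi : ∀ i, r * ‖a (single i 1)‖ ≤ η + ε * ‖a‖ := fun i => by
    calc r * ‖a (single i 1)‖ = ‖a (u i) - a (u i - r • single i 1)‖ := by
          rw [← map_sub, sub_sub_cancel, map_smul, norm_smul, Real.norm_of_nonneg hr]
      _ ≤ |a (u i)| + ‖a‖ * ‖u i - r • single i 1‖ :=
          (norm_sub_le _ _).trans (add_le_add le_rfl (a.le_opNorm _))
      _ ≤ η + ε * ‖a‖ := by nlinarith [ha i, hu i, norm_nonneg a]
  calc r * ‖a‖ ≤ ∑ i, r * ‖a (single i 1)‖ := by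
        rw [← Finset.mul_sum]
        exact mul_le_mul_of_nonneg_left (opNorm_le_sum_norm_apply_single a) hr
    _ ≤ ∑ _i : ι, (η + ε * ‖a‖) := Finset.sum_le_sum fun i _ => hi i
    _ = Fintype.card ι * (η + ε * ‖a‖) := by
        rw [Finset.sum_const, Finset.card_univ, nsmul_eq_mul]

end EuclideanSpace

theorem abs_sub_sub_fderiv_le_of_lipschitz {E : Type*} [NormedAddCommGroup E] [NormedSpace ℝ E]
    {f : E → ℝ} {L : ℝ} (hf : Differentiable ℝ f)
    (hL : ∀ x y, ‖fderiv ℝ f y - fderiv ℝ f x‖ ≤ L * ‖y - x‖) (x y : E) :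
    |f y - f x - fderiv ℝ f x (y - x)| ≤ L * ‖y - x‖ ^ 2 := by
  rcases eq_or_ne y x with rfl | hyx
  · simp
  have hL0 : 0 ≤ L :=
    nonneg_of_mul_nonneg_left ((norm_nonneg _).trans (hL x y))
      (norm_pos_iff.2 (sub_ne_zero.2 hyx))
  have hy : y ∈ Metric.closedBall x ‖y - x‖ := by simp [dist_eq_norm]
  have := (convex_closedBall x ‖y - x‖).norm_image_sub_le_of_norm_fderiv_le' (fun z _ => hf z)
    (fun z hz => (hL x z).trans
      (mul_le_mul_of_nonneg_left (by simpa [dist_eq_norm] using hz) hL0))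
    (Metric.mem_closedBall_self (norm_nonneg _)) hy
  simpa [Real.norm_eq_abs, sq, mul_assoc] using this

theorem abs_Dmul_le_of_C2NormLE {F : E2 → ℝ} {M : ℝ} (hF : C2NormLE F M) {α : ℕ × ℕ}
    (hα : α ∈ multiIdx2) (x : E2) : |Dmul α F x| ≤ M := by
  refine le_trans ?_ (hF x)
  rw [C2sum, ← Real.sqrt_sq_eq_abs]
  exact Real.sqrt_le_sqrt
    (Finset.single_le_sum (f := fun β => Dmul β F x ^ 2) (fun _ _ => sq_nonneg _) hα)

section SecondDerivative

open EuclideanSpace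

variable {φ : E2 → ℝ}

theorem differentiable_fderiv_of_contDiff_two (hφ : ContDiff ℝ 2 φ) :
    Differentiable ℝ (fderiv ℝ φ) :=
  (hφ.fderiv_right (m := 1) (by norm_num)).differentiable one_ne_zero

theorem pd_pd_eq_fderiv_fderiv (hφ : ContDiff ℝ 2 φ) (i j : Fin 2) (x : E2) :
    pd i (pd j φ) x = fderiv ℝ (fderiv ℝ φ) x (single i 1) (single j 1) := by
  have h : HasFDerivAt (fun y => ContinuousLinearMap.apply ℝ ℝ (single j 1) (fderiv ℝ φ y))
      ((ContinuousLinearMap.apply ℝ ℝ (single j 1)).comp (fderiv ℝ (fderiv ℝ φ) x)) x :=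
    (ContinuousLinearMap.apply ℝ ℝ _).hasFDerivAt.comp x
      (differentiable_fderiv_of_contDiff_two hφ x).hasFDerivAt
  exact congrArg (· (single i 1)) h.fderiv

theorem abs_fderiv_fderiv_single_le (hφ : ContDiff ℝ 2 φ) (hn : C2NormLE φ 1) (x : E2)
    (i j : Fin 2) : |fderiv ℝ (fderiv ℝ φ) x (single i 1) (single j 1)| ≤ 1 := by
  have hsymm : ∀ v w, fderiv ℝ (fderiv ℝ φ) x v w = fderiv ℝ (fderiv ℝ φ) x w v :=
    second_derivative_symmetric (fun y => (hφ.differentiable two_ne_zero y).hasFDerivAt)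
      (differentiable_fderiv_of_contDiff_two hφ x).hasFDerivAt
  have hD : ∀ α ∈ multiIdx2, |Dmul α φ x| ≤ 1 := fun α hα => abs_Dmul_le_of_C2NormLE hn hα x
  fin_cases i <;> fin_cases j
  · simpa [Dmul, pd_pd_eq_fderiv_fderiv hφ] using hD (2, 0) (by decide)
  · simpa [Dmul, pd_pd_eq_fderiv_fderiv hφ] using hD (1, 1) (by decide)
  · rw [hsymm]
    simpa [Dmul, pd_pd_eq_fderiv_fderiv hφ] using hD (1, 1) (by decide)
  · simpa [Dmul, pd_pd_eq_fderiv_fderiv hφ] using hD (0, 2) (by decide)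

theorem norm_fderiv_fderiv_le (hφ : ContDiff ℝ 2 φ) (hn : C2NormLE φ 1) (x : E2) :
    ‖fderiv ℝ (fderiv ℝ φ) x‖ ≤ 4 := by
  calc ‖fderiv ℝ (fderiv ℝ φ) x‖
      ≤ ∑ i, ‖fderiv ℝ (fderiv ℝ φ) x (single i 1)‖ := opNorm_le_sum_norm_apply_single _
    _ ≤ ∑ i : Fin 2, ∑ j : Fin 2, ‖fderiv ℝ (fderiv ℝ φ) x (single i 1) (single j 1)‖ :=
        Finset.sum_le_sum fun i _ => opNorm_le_sum_norm_apply_single _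
    _ ≤ ∑ _i : Fin 2, ∑ _j : Fin 2, (1 : ℝ) := by
        gcongr with i _ j
        exact abs_fderiv_fderiv_single_le hφ hn x i j
    _ = 4 := by norm_num

theorem norm_fderiv_sub_le (hφ : ContDiff ℝ 2 φ) (hn : C2NormLE φ 1) (x y : E2) :
    ‖fderiv ℝ φ y - fderiv ℝ φ x‖ ≤ 4 * ‖y - x‖ :=
  convex_univ.norm_image_sub_le_of_norm_fderiv_le
    (fun z _ => differentiable_fderiv_of_contDiff_two hφ z)
    (fun z _ => norm_fderiv_fderiv_le hφ hn z) (mem_univ x) (mem_univ y)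

end SecondDerivative

section Probes

open EuclideanSpace

variable {f : E2 → ℝ} {c z₀ : E2} {z : Fin 2 → E2} {δ : ℝ}

theorem jet_bound_of_vanishing_near_probes (hδ : 0 < δ) (hf : Differentiable ℝ f)
    (hlip : ∀ x y, ‖fderiv ℝ f y - fderiv ℝ f x‖ ≤ 4 * ‖y - x‖)
    (hz₀ : dist c z₀ ≤ δ / 100) (hz : ∀ i, dist (c + (δ / 4) • single i 1) (z i) ≤ δ / 100)
    (hf₀ : f z₀ = 0) (hfz : ∀ i, f (z i) = 0) :
    |f c| ≤ δ ^ 2 ∧ ‖fderiv ℝ f c‖ ≤ 3 * δ := by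
  set a := fderiv ℝ f z₀
  have hc : ‖c - z₀‖ ≤ δ / 100 := by rwa [← dist_eq_norm]
  have hnear : ∀ i, ‖(z i - z₀) - (δ / 4) • single i 1‖ ≤ δ / 50 := fun i => by
    rw [show (z i - z₀) - (δ / 4) • single i 1 = (c - z₀) - (c + (δ / 4) • single i 1 - z i) by
      abel]
    have := hz i
    rw [dist_eq_norm] at this
    linarith [norm_sub_le (c - z₀) (c + (δ / 4) • single i 1 - z i)]
  have hlen : ∀ i, ‖z i - z₀‖ ≤ 27 / 100 * δ := fun i => by
    have h : ‖(δ / 4) • (single i 1 : E2)‖ = δ / 4 := by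
      rw [norm_smul, PiLp.norm_single, norm_one, mul_one, Real.norm_of_nonneg (by positivity)]
    linarith [norm_sub_norm_le (z i - z₀) ((δ / 4) • single i 1), hnear i]
  have htaylor : ∀ i, |a (z i - z₀)| ≤ 4 * (27 / 100 * δ) ^ 2 := fun i => by
    have h := abs_sub_sub_fderiv_le_of_lipschitz hf hlip z₀ (z i)
    rw [hfz, hf₀, sub_self, zero_sub, abs_neg] at h
    exact h.trans (by gcongr; exact hlen i)
  have ha : δ / 4 * ‖a‖ ≤ 2 * (4 * (27 / 100 * δ) ^ 2 + δ / 50 * ‖a‖) := by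
    simpa using mul_opNorm_le_of_near_smul_single a (by positivity) hnear htaylor
  have ha' : ‖a‖ ≤ 14 / 5 * δ := by nlinarith [norm_nonneg a]
  constructor
  · have h := abs_sub_sub_fderiv_le_of_lipschitz hf hlip z₀ c
    rw [hf₀, sub_zero] at h
    have hac : |a (c - z₀)| ≤ 14 / 5 * δ * (δ / 100) :=
      (a.le_opNorm _).trans (mul_le_mul ha' hc (norm_nonneg _) (by positivity))
    nlinarith [abs_sub_abs_le_abs_sub (f c) (a (c - z₀)), norm_nonneg (c - z₀)]
  · linarith [norm_sub_norm_le (fderiv ℝ f c) a, hlip z₀ c]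

end Probes

theorem hasFDerivAt_jet (φ : E2 → ℝ) (x y : E2) : HasFDerivAt (jet φ x) (fderiv ℝ φ x) y := by
  have h := ((fderiv ℝ φ x).hasFDerivAt.comp y ((hasFDerivAt_id y).sub_const x)).const_add (φ x)
  rwa [ContinuousLinearMap.comp_id] at h

theorem jetNormAt_le_abs_add_norm (x : E2) (P : E2 → ℝ) :
    jetNormAt x P ≤ |P x| + ‖fderiv ℝ P x‖ := by
  refine Real.sqrt_le_iff.2 ⟨by positivity, ?_⟩
  nlinarith [sq_abs (P x), abs_nonneg (P x), norm_nonneg (fderiv ℝ P x)]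

theorem jetNormAt_jet_sub_jet_le (φ ψ : E2 → ℝ) (x : E2) :
    jetNormAt x (jet φ x - jet ψ x) ≤ |φ x - ψ x| + ‖fderiv ℝ φ x - fderiv ℝ ψ x‖ := by
  refine (jetNormAt_le_abs_add_norm x _).trans_eq ?_
  rw [((hasFDerivAt_jet φ x x).sub (hasFDerivAt_jet ψ x x)).fderiv]
  simp [jet]

theorem center_mem_sqC (c : E2) {δ : ℝ} (hδ : 0 < δ) : c ∈ sqC c δ :=
  fun _ => ⟨by linarith, by linarith⟩

theorem add_smul_single_mem_sqC (c : E2) {δ : ℝ} (hδ : 0 < δ) (i : Fin 2) :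
    c + (δ / 4) • EuclideanSpace.single i 1 ∈ sqC c δ := by
  intro j
  simp only [PiLp.add_apply, PiLp.smul_apply, PiLp.single_apply, smul_eq_mul]
  split_ifs <;> constructor <;> linarith

theorem jetDiam_sigmaSharp_le {E : Set E2} {k : ℕ} {c z₀ : E2} {z : Fin 2 → E2} {δ : ℝ}
    (hk : 3 ≤ k) (hδ : 0 < δ) (hz₀E : z₀ ∈ E) (hzE : ∀ i, z i ∈ E) (hz₀ : dist c z₀ ≤ δ / 100)
    (hz : ∀ i, dist (c + (δ / 4) • EuclideanSpace.single i 1) (z i) ≤ δ / 100) :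
    jetDiam c (sigmaSharp E c k) ≤ 2 * (δ ^ 2 + 3 * δ) := by
  set S : Finset E2 := insert z₀ (Finset.univ.image z)
  have hSE : (S : Set E2) ⊆ E := by
    rw [Finset.coe_insert, Finset.coe_image, Finset.coe_univ, Set.image_univ]
    exact insert_subset hz₀E (range_subset_iff.2 hzE)
  have hS : (S : Set E2).ncard ≤ k := by
    rw [ncard_coe_finset]
    have h₁ : S.card ≤ (Finset.univ.image z).card + 1 := Finset.card_insert_le _ _
    have h₂ := (Finset.card_image_le (s := Finset.univ) (f := z)).trans_eq (Finset.card_fin 2)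
    omega
  have hbound : ∀ P ∈ sigmaSharp E c k,
      ∃ φ, P = jet φ c ∧ |φ c| ≤ δ ^ 2 ∧ ‖fderiv ℝ φ c‖ ≤ 3 * δ := by
    intro P hP
    obtain ⟨φ, hφ, hφS, hφn, rfl⟩ := hP S hSE hS
    exact ⟨φ, rfl, jet_bound_of_vanishing_near_probes hδ (hφ.differentiable two_ne_zero)
      (norm_fderiv_sub_le hφ hφn) hz₀ hz (hφS _ (by simp [S])) fun i => hφS _ (by simp [S])⟩
  refine Real.sSup_le ?_ (by positivity)
  rintro r ⟨P, hP, P', hP', rfl⟩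
  obtain ⟨φ, rfl, hφc, hφd⟩ := hbound P hP
  obtain ⟨ψ, rfl, hψc, hψd⟩ := hbound P' hP'
  calc jetNormAt c (jet φ c - jet ψ c)
      ≤ |φ c - ψ c| + ‖fderiv ℝ φ c - fderiv ℝ ψ c‖ := jetNormAt_jet_sub_jet_le φ ψ c
    _ ≤ (δ ^ 2 + δ ^ 2) + (3 * δ + 3 * δ) :=
        add_le_add ((abs_sub _ _).trans (add_le_add hφc hψc))
          ((norm_sub_le _ _).trans (add_le_add hφd hψd))
    _ = 2 * (δ ^ 2 + 3 * δ) := by ring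

/-- (Lemma 5.6 of [JL20].) Each CZ square contains a representative
point quantitatively far from `E`. -/
theorem CZ_representative_point :
    ∀ (k₀ : ℕ) (C₀ : ℝ), 4 ≤ k₀ → 1000 ≤ C₀ →
      ∃ c₀ : ℝ, 0 < c₀ ∧
        ∀ E : Set E2, E.Finite →
          ∀ q ∈ Lambda0 E k₀ C₀,
            ∃ x ∈ dyadicSq q, ∀ y ∈ E, c₀ * dyadicLen q ≤ dist x y := by
  intro k₀ C₀ hk₀ hC₀
  refine ⟨1 / 100, by norm_num, fun E _ q hq => ?_⟩
  obtain ⟨hδ1, hdiam, -⟩ := hq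
  have hδ : 0 < dyadicLen q := zpow_pos two_pos _
  by_contra! hfar
  obtain ⟨z₀, hz₀E, hz₀⟩ := hfar _ (center_mem_sqC (dyadicCenter q) hδ)
  choose z hzE hz using fun i => hfar _ (add_smul_single_mem_sqC (dyadicCenter q) hδ i)
  have hlow := hdiam _ (center_mem_sqC (dyadicCenter q) (by positivity : 0 < 2 * dyadicLen q))
  have hup := jetDiam_sigmaSharp_le (k := k₀) (c := dyadicCenter q) (by omega) hδ hz₀E hzE
    (by linarith) fun i => by linarith [hz i]
  nlinarith

end
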